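/- Let M be a semiprime Γ-ring and σ: M → M a strong commutativity preserving endomorphism. Then (σ(x) − x) α (yβzγt − yγtβz) = 0 for all x, y, z, t ∈ M and α, β, γ ∈ Γ. -/

import Mathlib

/-- A Γ-ring in the sense of Barnes: additive abelian groups `M` and `Γ` with a
triadditive, associative product `M × Γ × M → M`. -/
structure GammaRing (M : Type*) (Γ : Type*) [AddCommGroup M] [AddCommGroup Γ] where
  tri : M → Γ → M → M
  add_left : ∀ (a b : M) (α : Γ) (c : M), tri (a + b) α c = tri a α c + tri b α c
  add_mid : ∀ (a : M) (α β : Γ) (b : M), tri a (α + β) b = tri a α b + tri a β b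
  add_right : ∀ (a : M) (α : Γ) (b c : M), tri a α (b + c) = tri a α b + tri a α c
  assoc : ∀ (a : M) (α : Γ) (b : M) (β : Γ) (c : M),
    tri (tri a α b) β c = tri a α (tri b β c)

namespace GammaRing

variable {M Γ : Type*} [AddCommGroup M] [AddCommGroup Γ]

/-- The commutator `[a,b]_α = aαb - bαa`. -/
def comm (G : GammaRing M Γ) (a : M) (α : Γ) (b : M) : M :=
  G.tri a α b - G.tri b α a

/-- The center `Z(M)`. -/
def center (G : GammaRing M Γ) : Set M :=
  {a | ∀ (b : M) (α : Γ), G.tri a α b = G.tri b α a}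

/-- A left derivation: additive with `δ(xαy) = xαδ(y) + yαδ(x)`. -/
def IsLeftDerivation (G : GammaRing M Γ) (δ : M → M) : Prop :=
  (∀ x y : M, δ (x + y) = δ x + δ y) ∧
  ∀ (x : M) (α : Γ) (y : M), δ (G.tri x α y) = G.tri x α (δ y) + G.tri y α (δ x)

/-- A derivation: additive with `μ(xαy) = μ(x)αy + xαμ(y)`. -/
def IsDerivation (G : GammaRing M Γ) (μ : M → M) : Prop :=
  (∀ x y : M, μ (x + y) = μ x + μ y) ∧
  ∀ (x : M) (α : Γ) (y : M), μ (G.tri x α y) = G.tri (μ x) α y + G.tri x α (μ y)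

/-- An endomorphism: additive with `σ(xαy) = σ(x)ασ(y)`. -/
def IsEndomorphism (G : GammaRing M Γ) (σ : M → M) : Prop :=
  (∀ x y : M, σ (x + y) = σ x + σ y) ∧
  ∀ (x : M) (α : Γ) (y : M), σ (G.tri x α y) = G.tri (σ x) α (σ y)

/-- Semiprime: `aΓMΓa = 0` implies `a = 0`. -/
def IsSemiprime (G : GammaRing M Γ) : Prop :=
  ∀ a : M, (∀ (α : Γ) (m : M) (β : Γ), G.tri (G.tri a α m) β a = 0) → a = 0

/-- Prime: `aΓMΓb = 0` implies `a = 0` or `b = 0`. -/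
def IsPrime (G : GammaRing M Γ) : Prop :=
  ∀ a b : M, (∀ (α : Γ) (m : M) (β : Γ), G.tri (G.tri a α m) β b = 0) → a = 0 ∨ b = 0

/-- Strong commutativity preserving: `[f(x),f(y)]_α = [x,y]_α`. -/
def IsSCP (G : GammaRing M Γ) (f : M → M) : Prop :=
  ∀ (x : M) (α : Γ) (y : M), G.comm (f x) α (f y) = G.comm x α y

end GammaRing


/-!
The scp identity for `x` and `xαy`, together with multiplicativity of `σ`, gives
`(σ(x) - x) α [x, y]_α = 0`. Expanding `[x, yγt]_α` turns this into
`(σ(x) - x) α (yα(xγt) - yγ(tαx)) = 0`. Linearising in `x` makes the expression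
antisymmetric in the two slots, and semiprimeness kills it: if `aαP = -(bβQ)` while
`aα(MβQ) = 0`, then `(aαP) Γ M Γ (aαP) = 0`. The same polarisation trick, applied to
the Γ-variable, separates the two occurrences of `α`.
-/

lemma eq_neg_swap_of_diag_eq_zero {A B : Type*} [AddCommGroup A] [AddCommGroup B]
    (Φ : A → A → B) (add_left : ∀ a b c, Φ (a + b) c = Φ a c + Φ b c)
    (add_right : ∀ a b c, Φ a (b + c) = Φ a b + Φ a c) (diag : ∀ a, Φ a a = 0) (a b : A) :
    Φ a b = -Φ b a := by
  have h := diag (a + b)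
  rw [add_left, add_right, add_right, diag a, diag b, zero_add, add_zero] at h
  exact eq_neg_of_add_eq_zero_left h

namespace GammaRing

variable {M Γ : Type*} [AddCommGroup M] [AddCommGroup Γ] (G : GammaRing M Γ)

def triLeft (a : M) (α : Γ) : M →+ M :=
  AddMonoidHom.mk' (G.tri a α) (G.add_right a α)

def triRight (α : Γ) (c : M) : M →+ M :=
  AddMonoidHom.mk' (fun a => G.tri a α c) (fun a b => G.add_left a b α c)

theorem tri_zero_left (α : Γ) (c : M) : G.tri 0 α c = 0 :=
  (G.triRight α c).map_zero

theorem tri_sub_left (a b : M) (α : Γ) (c : M) :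
    G.tri (a - b) α c = G.tri a α c - G.tri b α c :=
  (G.triRight α c).map_sub a b

theorem tri_sub_right (a : M) (α : Γ) (b c : M) :
    G.tri a α (b - c) = G.tri a α b - G.tri a α c :=
  (G.triLeft a α).map_sub b c

theorem tri_neg_right (a : M) (α : Γ) (b : M) : G.tri a α (-b) = -G.tri a α b :=
  (G.triLeft a α).map_neg b

def swapTail (y : M) (β : Γ) (z : M) (γ : Γ) (t : M) : M :=
  G.tri y β (G.tri z γ t) - G.tri y γ (G.tri t β z)

theorem tri_swapTail (n : M) (δ : Γ) (y : M) (β : Γ) (z : M) (γ : Γ) (t : M) :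
    G.tri n δ (G.swapTail y β z γ t) = G.swapTail (G.tri n δ y) β z γ t := by
  rw [swapTail, swapTail, tri_sub_right, assoc, assoc]

theorem swapTail_add_mid (y : M) (β : Γ) (z z' : M) (γ : Γ) (t : M) :
    G.swapTail y β (z + z') γ t = G.swapTail y β z γ t + G.swapTail y β z' γ t := by
  simp only [swapTail, add_left, add_right]
  abel

theorem swapTail_add_gamma (y : M) (β β' : Γ) (z : M) (γ : Γ) (t : M) :
    G.swapTail y (β + β') z γ t = G.swapTail y β z γ t + G.swapTail y β' z γ t := by
  simp only [swapTail, add_mid, add_right]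
  abel

theorem comm_tri_self (a : M) (α : Γ) (b : M) :
    G.comm a α (G.tri a α b) = G.tri a α (G.comm a α b) := by
  rw [comm, comm, tri_sub_right, assoc]

theorem comm_tri_right (x : M) (α : Γ) (y : M) (γ : Γ) (t : M) :
    G.comm x α (G.tri y γ t) = G.tri (G.comm x α y) γ t + G.swapTail y α x γ t := by
  simp only [comm, swapTail, tri_sub_left, assoc]
  abel

theorem IsSemiprime.tri_eq_zero_of_eq_neg {G : GammaRing M Γ} (hsp : G.IsSemiprime)
    {a b P Q : M} {α β : Γ} (hneg : G.tri a α P = -G.tri b β Q)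
    (hann : ∀ n : M, G.tri a α (G.tri n β Q) = 0) : G.tri a α P = 0 := by
  refine hsp _ fun δ m ε => ?_
  calc G.tri (G.tri (G.tri a α P) δ m) ε (G.tri a α P)
      = G.tri a α (G.tri P δ (G.tri m ε (G.tri a α P))) := by simp only [assoc]
    _ = -G.tri a α (G.tri (G.tri P δ (G.tri m ε b)) β Q) := by
        rw [hneg]
        simp only [tri_neg_right, assoc]
    _ = 0 := by rw [hann, neg_zero]

variable {G} {σ : M → M}

theorem IsSCP.tri_sub_comm_eq_zero (hσ : G.IsEndomorphism σ) (hscp : G.IsSCP σ)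
    (x : M) (α : Γ) (y : M) : G.tri (σ x - x) α (G.comm x α y) = 0 := by
  have h := hscp x α (G.tri x α y)
  rw [hσ.2, comm_tri_self, comm_tri_self, hscp] at h
  rw [tri_sub_left, h, sub_self]

theorem IsSCP.tri_sub_swapTail_self_eq_zero (hσ : G.IsEndomorphism σ) (hscp : G.IsSCP σ)
    (x y : M) (α γ : Γ) (t : M) : G.tri (σ x - x) α (G.swapTail y α x γ t) = 0 := by
  have h := hscp.tri_sub_comm_eq_zero hσ x α (G.tri y γ t)
  rwa [comm_tri_right, add_right, ← assoc, hscp.tri_sub_comm_eq_zero hσ, tri_zero_left,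
    zero_add] at h

theorem IsSCP.tri_sub_swapTail_eq_zero (hsp : G.IsSemiprime) (hσ : G.IsEndomorphism σ)
    (hscp : G.IsSCP σ) (x y : M) (α : Γ) (z : M) (γ : Γ) (t : M) :
    G.tri (σ x - x) α (G.swapTail y α z γ t) = 0 := by
  have antisymm := eq_neg_swap_of_diag_eq_zero
    (fun x z => G.tri (σ x - x) α (G.swapTail y α z γ t))
    (fun _ _ _ => by simp only [hσ.1, add_sub_add_comm, add_left])
    (fun _ _ _ => by simp only [swapTail_add_mid, add_right])
    (fun a => hscp.tri_sub_swapTail_self_eq_zero hσ a y α γ t) x z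
  refine hsp.tri_eq_zero_of_eq_neg antisymm fun n => ?_
  rw [tri_swapTail]
  exact hscp.tri_sub_swapTail_self_eq_zero hσ x _ α γ t

end GammaRing

/-- For an scp endomorphism `σ` of a semiprime Γ-ring,
`(σ(x) − x) α (yβzγt − yγtβz) = 0`. -/
theorem semiprime_scp_endomorphism_identity {M Γ : Type*}
    [AddCommGroup M] [AddCommGroup Γ] (G : GammaRing M Γ) (hsp : G.IsSemiprime)
    (σ : M → M) (hσ : G.IsEndomorphism σ) (hscp : G.IsSCP σ) :
    ∀ (x y z t : M) (α β γ : Γ),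
      G.tri (σ x - x) α
        (G.tri y β (G.tri z γ t) - G.tri y γ (G.tri t β z)) = 0 := by
  intro x y z t α β γ
  have antisymm := eq_neg_swap_of_diag_eq_zero
    (fun α β => G.tri (σ x - x) α (G.swapTail y β z γ t))
    (fun a b _ => G.add_mid _ a b _)
    (fun _ _ _ => by simp only [GammaRing.swapTail_add_gamma, G.add_right])
    (fun a => hscp.tri_sub_swapTail_eq_zero hsp hσ x y a z γ t) α β
  refine hsp.tri_eq_zero_of_eq_neg antisymm fun n => ?_
  rw [G.tri_swapTail]
  exact hscp.tri_sub_swapTail_eq_zero hsp hσ x _ α z γ t
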